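/- If the Chebyshev condition Z(β_i)·Z(2β_{i+1}−β_i)/Z(β_{i+1})² ≤ 1/p holds for the partition function Z(β) = Σ_x exp(−βH(x)), then the corresponding Gibbs states satisfy the slow-varying condition |⟨Π_{β_i}|Π_{β_{i+1}}⟩|² ≥ p, i.e., (Z((β_i+β_{i+1})/2))² / (Z(β_i)·Z(β_{i+1})) ≥ p. -/
import Mathlib


lemma Zpos_aux {Ω : Type*} [Fintype Ω] [Nonempty Ω] (H : Ω → ℝ) (Z : ℝ → ℝ)
    (hZ : ∀ β, Z β = ∑ x : Ω, Real.exp (-β * H x)) (β : ℝ) : 0 < Z β := by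
  rw [hZ]
  exact Finset.sum_pos (fun x _ => Real.exp_pos _) Finset.univ_nonempty

lemma Zsq_le_aux {Ω : Type*} [Fintype Ω] [Nonempty Ω] (H : Ω → ℝ) (Z : ℝ → ℝ)
    (hZ : ∀ β, Z β = ∑ x : Ω, Real.exp (-β * H x)) (a b : ℝ) :
    Z ((a + b) / 2) ^ 2 ≤ Z a * Z b := by
  rw [hZ, hZ, hZ]
  have h := Finset.sum_mul_sq_le_sq_mul_sq Finset.univ
    (fun x : Ω => Real.exp (-a * H x / 2)) (fun x : Ω => Real.exp (-b * H x / 2))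
  calc (∑ x : Ω, Real.exp (-((a + b) / 2) * H x)) ^ 2
      = (∑ x : Ω, Real.exp (-a * H x / 2) * Real.exp (-b * H x / 2)) ^ 2 := by
        congr 1; apply Finset.sum_congr rfl; intro x _
        rw [← Real.exp_add]; ring_nf
    _ ≤ (∑ x : Ω, Real.exp (-a * H x / 2) ^ 2) * ∑ x : Ω, Real.exp (-b * H x / 2) ^ 2 := h
    _ = (∑ x : Ω, Real.exp (-a * H x)) * ∑ x : Ω, Real.exp (-b * H x) := by
        congr 1 <;> refine Finset.sum_congr rfl fun x _ => ?_ <;>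
          rw [sq, ← Real.exp_add] <;> ring_nf

/-- The Chebyshev condition `Z(β_i)Z(2β_{i+1}-β_i)/Z(β_{i+1})² ≤ 1/p` implies the
slow-varying condition `Z((β_i+β_{i+1})/2)² / (Z(β_i)Z(β_{i+1})) ≥ p`. -/
theorem chebyshev_implies_slow_varying {Ω : Type*} [Fintype Ω] [Nonempty Ω]
    (H : Ω → ℝ) (βi βi1 p : ℝ) (hβ : βi < βi1) (hp0 : 0 < p) (hp1 : p ≤ 1)
    (Z : ℝ → ℝ) (hZ : ∀ β, Z β = ∑ x : Ω, Real.exp (-β * H x))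
    (hcheb : Z βi * Z (2 * βi1 - βi) / Z βi1 ^ 2 ≤ 1 / p) :
    p ≤ (Z ((βi + βi1) / 2)) ^ 2 / (Z βi * Z βi1) := by
  have hA := Zpos_aux H Z hZ βi
  have hB := Zpos_aux H Z hZ βi1
  have hC := Zpos_aux H Z hZ (2 * βi1 - βi)
  have hM := Zpos_aux H Z hZ ((βi + βi1) / 2)
  have hM' := Zpos_aux H Z hZ ((3 * βi1 - βi) / 2)
  have h1 : Z βi1 ^ 2 ≤ Z ((βi + βi1) / 2) * Z ((3 * βi1 - βi) / 2) := by
    have := Zsq_le_aux H Z hZ ((βi + βi1) / 2) ((3 * βi1 - βi) / 2)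
    have e : ((βi + βi1) / 2 + (3 * βi1 - βi) / 2) / 2 = βi1 := by ring
    rw [e] at this; exact this
  have h2 : Z ((3 * βi1 - βi) / 2) ^ 2 ≤ Z βi1 * Z (2 * βi1 - βi) := by
    have := Zsq_le_aux H Z hZ βi1 (2 * βi1 - βi)
    have e : (βi1 + (2 * βi1 - βi)) / 2 = (3 * βi1 - βi) / 2 := by ring
    rw [e] at this; exact this
  -- from hcheb: p * (Z βi * Z (2βi1-βi)) ≤ Z βi1 ^ 2
  have hcheb' : p * (Z βi * Z (2 * βi1 - βi)) ≤ Z βi1 ^ 2 := by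
    rw [div_le_div_iff₀ (by positivity) hp0] at hcheb
    nlinarith
  rw [le_div_iff₀ (by positivity)]
  nlinarith [sq_nonneg (Z ((βi + βi1) / 2) * Z ((3 * βi1 - βi) / 2) - Z βi1 ^ 2),
    mul_pos hM hM', mul_pos hA hC, mul_pos hB hC]
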